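/- Let epsilon be real with 0 < epsilon < 1, set delta = epsilon/15 and k = ceil(3/epsilon) + 1. Let alpha be the unique real in (1, 2) with -2*alpha + 3 + (alpha - 1)*log(2*(alpha - 1)/alpha) = 0. Set z'_k = (1 + epsilon/4)*alpha and y_k = (z'_k - 1)/z'_k; for 1 ≤ j ≤ k set y_j = (1/2)*(2*y_k)^((j-1)/(k-1)) and z'_j = y_k/(y_j*(1 - y_k)); set z_1 = z'_1 and z_j = z'_j - z'_{j-1} for 2 ≤ j ≤ k; set w_1 = 1 and w_j = y_j for 2 ≤ j ≤ k. Then sum_{j=1}^{k} z_j * (w_j - delta) ≥ 1. -/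

import Mathlib

/-!
With `q = 2 y_k` and `r = q ^ (1 / (k - 1))`, the `y_j` form a geometric sequence of ratio `r` and
`z'_j y_j = y_k / (1 - y_k)` is constant, so every type `j ≥ 2` carries the same workload
`z_j y_j`, the sum of the `z_j` telescopes to `z'_k`, and the left-hand side is at least `1` iff
`δ + (k - 1) y_k (r - 1) ≤ 3 y_k - 1`. As `k → ∞`, `(k - 1)(r - 1) → log q`, so the slack in the
limit is `limitSurplus y_k = 3 y_k - 1 - y_k log (2 y_k)`. The equation defining `α` says exactly
that `limitSurplus` vanishes at `(α - 1) / α`, and `y_k` exceeds this point by at least `ε / 8`.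
Since `limitSurplus` is concave with slope at least `2` on `(0, 1/2]`, this gains `ε / 4`, which
pays for `δ = ε / 15` and for the second-order error `y_k (log q) ^ 2 / (k - 1) ≤ ε / 6`.
-/

open Real Finset

noncomputable def limitSurplus (y : ℝ) : ℝ := 3 * y - 1 - y * log (2 * y)

theorem limitSurplus_sub_limitSurplus_ge {a b : ℝ} (ha : 0 < a) (hb : 0 < b) :
    (2 - log (2 * b)) * (b - a) ≤ limitSurplus b - limitSurplus a := by
  have hlog : a * (log (2 * b) - log (2 * a)) ≤ b - a := by
    have h := log_le_sub_one_of_pos (div_pos hb ha)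
    rw [log_div hb.ne' ha.ne'] at h
    rw [log_mul two_ne_zero hb.ne', log_mul two_ne_zero ha.ne']
    calc a * (log 2 + log b - (log 2 + log a)) = a * (log b - log a) := by ring
      _ ≤ a * (b / a - 1) := mul_le_mul_of_nonneg_left h ha.le
      _ = b - a := by field_simp
  unfold limitSurplus
  nlinarith

theorem limitSurplus_eq_zero_of_alpha {α : ℝ} (hα : 1 < α)
    (h : -2 * α + 3 + (α - 1) * log (2 * (α - 1) / α) = 0) :
    limitSurplus ((α - 1) / α) = 0 := by
  have hα0 : α ≠ 0 := by positivity
  have : α * limitSurplus ((α - 1) / α) = 0 := by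
    rw [limitSurplus, ← mul_div_assoc 2]
    generalize log (2 * (α - 1) / α) = L at h ⊢
    field_simp
    linarith
  simpa [hα0] using this

theorem quarter_le_of_limitSurplus_eq_zero {y : ℝ} (hy : 0 < y) (h : limitSurplus y = 0) :
    1 / 4 ≤ y := by
  by_contra! hlt
  have hquarter : limitSurplus (1 / 4) ≤ 0 := by
    have h2 := log_le_sub_one_of_pos (two_pos : (0 : ℝ) < 2)
    rw [limitSurplus, show (2 : ℝ) * (1 / 4) = 2⁻¹ by norm_num, log_inv]
    linarith
  have hconc := limitSurplus_sub_limitSurplus_ge hy (by norm_num : (0 : ℝ) < 1 / 4)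
  rw [show (2 : ℝ) * (1 / 4) = 2⁻¹ by norm_num, log_inv] at hconc
  nlinarith [log_pos one_lt_two]

theorem le_three_eighths_of_limitSurplus_eq_zero {y : ℝ} (hy : 0 < y) (hy2 : y < 1 / 2)
    (h : limitSurplus y = 0) : y ≤ 3 / 8 := by
  by_contra! hlt
  have hpos : 0 < limitSurplus (3 / 8) := by
    have : log (2 * (3 / 8)) < 0 := log_neg (by norm_num) (by norm_num)
    rw [limitSurplus]
    nlinarith
  have hconc := limitSurplus_sub_limitSurplus_ge (by norm_num : (0 : ℝ) < 3 / 8) hy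
  have : log (2 * y) < 0 := log_neg (by positivity) (by linarith)
  nlinarith

theorem mul_rpow_inv_sub_one_le {q m : ℝ} (hq : 0 < q) (hm : 0 < m) (hlog : |log q| ≤ m) :
    m * (q ^ (1 / m) - 1) ≤ log q + log q ^ 2 / m := by
  have hx : |log q / m| ≤ 1 := by
    rw [abs_div, abs_of_pos hm, div_le_one hm]; exact hlog
  have hexp := (abs_le.mp (abs_exp_sub_one_sub_id_le hx)).2
  rw [rpow_def_of_pos hq, mul_one_div]
  calc m * (exp (log q / m) - 1) ≤ m * (log q / m + (log q / m) ^ 2) := by gcongr; linarith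
    _ = log q + log q ^ 2 / m := by field_simp

theorem sum_Icc_mul_sub_eq {z w zp : ℕ → ℝ} {d δ : ℝ} {k : ℕ} (hk : 1 ≤ k)
    (hz1 : z 1 = zp 1) (hz : ∀ j, 2 ≤ j → j ≤ k → z j = zp j - zp (j - 1))
    (hw1 : w 1 = 1) (hzw : ∀ j, 2 ≤ j → j ≤ k → z j * w j = d) :
    ∑ j ∈ Icc 1 k, z j * (w j - δ) = zp 1 + ((k : ℝ) - 1) * d - δ * zp k := by
  induction k, hk using Nat.le_induction with
  | base => simp [hz1, hw1]; ring
  | succ n hn ih =>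
    rw [sum_Icc_succ_top (by omega), ih (fun j h1 h2 => hz j h1 (by omega))
      (fun j h1 h2 => hzw j h1 (by omega))]
    have e1 := hz (n + 1) (by omega) le_rfl
    have e2 := hzw (n + 1) (by omega) le_rfl
    simp only [Nat.add_sub_cancel] at e1
    push_cast
    linear_combination e2 - δ * e1

theorem eq_rpow_inv_mul_of_eq_mul_rpow {y : ℕ → ℝ} {c q m : ℝ} {k : ℕ} (hq : 0 < q)
    (hy : ∀ j, 1 ≤ j → j ≤ k → y j = c * q ^ (((j : ℝ) - 1) / m)) :
    ∀ j, 2 ≤ j → j ≤ k → y j = q ^ (1 / m) * y (j - 1) := by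
  intro j hj2 hjk
  rw [hy j (by omega) hjk, hy (j - 1) (by omega) (by omega), Nat.cast_sub (by omega),
    show ((j : ℝ) - 1) / m = 1 / m + ((j : ℝ) - 1 - 1) / m by ring, rpow_add hq]
  push_cast
  ring

theorem sum_Icc_mul_sub_eq_of_geometric {y zp z w : ℕ → ℝ} {c r δ : ℝ} {k : ℕ} (hk : 1 ≤ k)
    (hy : ∀ j, 1 ≤ j → j ≤ k → 0 < y j) (hr : ∀ j, 2 ≤ j → j ≤ k → y j = r * y (j - 1))
    (hzp : ∀ j, 1 ≤ j → j ≤ k → zp j = c / y j)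
    (hz1 : z 1 = zp 1) (hz : ∀ j, 2 ≤ j → j ≤ k → z j = zp j - zp (j - 1))
    (hw1 : w 1 = 1) (hw : ∀ j, 2 ≤ j → j ≤ k → w j = y j) :
    ∑ j ∈ Icc 1 k, z j * (w j - δ) = c / y 1 + ((k : ℝ) - 1) * (c * (1 - r)) - δ * (c / y k) := by
  rw [sum_Icc_mul_sub_eq hk hz1 hz hw1 (d := c * (1 - r)), hzp 1 le_rfl hk, hzp k hk le_rfl]
  intro j hj2 hjk
  have hprev := hy (j - 1) (by omega) (by omega)
  rw [hz j hj2 hjk, hw j hj2 hjk, hzp j (by omega) hjk, hzp (j - 1) (by omega) (by omega),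
    hr j hj2 hjk]
  have : r ≠ 0 := by
    have hj := (hy j (by omega) hjk).ne'
    rw [hr j hj2 hjk] at hj
    exact left_ne_zero_of_mul hj
  field_simp

theorem inflated_alpha_bounds {ε α : ℝ} (hε0 : 0 < ε) (hε1 : ε < 1) (hα1 : 1 < α)
    (hα : (α - 1) / α ≤ 3 / 8) :
    ((1 + ε / 4) * α - 1) / ((1 + ε / 4) * α) ≤ 1 / 2 ∧
      ε / 8 ≤ ((1 + ε / 4) * α - 1) / ((1 + ε / 4) * α) - (α - 1) / α := by
  rw [div_le_iff₀ (by positivity)] at hα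
  have hle : ((1 + ε / 4) * α - 1) / ((1 + ε / 4) * α) ≤ 1 / 2 := by
    rw [div_le_iff₀ (by positivity)]
    nlinarith
  refine ⟨hle, ?_⟩
  have : ((1 + ε / 4) * α - 1) / ((1 + ε / 4) * α) - (α - 1) / α
      = ε / 4 * (1 - ((1 + ε / 4) * α - 1) / ((1 + ε / 4) * α)) := by
    field_simp
    ring
  nlinarith

theorem div_fifteen_add_mul_rpow_sub_one_le {ε ys yk m : ℝ} (hε : 0 < ε) (hys0 : 0 < ys)
    (hys : limitSurplus ys = 0) (hgap : ε / 8 ≤ yk - ys) (hyk : yk ≤ 1 / 2) (hm : 3 / ε ≤ m) :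
    ε / 15 + m * yk * ((2 * yk) ^ (1 / m) - 1) ≤ 3 * yk - 1 := by
  have hys4 := quarter_le_of_limitSurplus_eq_zero hys0 hys
  have hyk0 : 0 < 2 * yk := by linarith
  set L := log (2 * yk) with hL
  have hL0 : L ≤ 0 := log_nonpos hyk0.le (by linarith)
  have hL1 : -1 ≤ L := by
    have h := one_sub_inv_le_log_of_pos hyk0
    have : (2 * yk)⁻¹ ≤ 2 := by rw [inv_le_comm₀ hyk0 two_pos]; linarith
    linarith
  have hε2 : ε ≤ 2 := by linarith
  have hm0 : 0 < m := lt_of_lt_of_le (by positivity) hm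
  have hinv : 1 / m ≤ ε / 3 := by
    rw [div_le_iff₀ hm0]; rw [div_le_iff₀ hε] at hm; linarith
  have hLm : |L| ≤ m := by
    rw [abs_le]; constructor <;> nlinarith [(div_le_iff₀ hε).1 hm]
  have hrpow := mul_rpow_inv_sub_one_le hyk0 hm0 hLm
  rw [← hL] at hrpow
  have hsq : L ^ 2 / m ≤ ε / 3 := by
    calc L ^ 2 / m = L ^ 2 * (1 / m) := by ring
      _ ≤ 1 * (ε / 3) := by gcongr; nlinarith
      _ = ε / 3 := one_mul _
  have hconc := limitSurplus_sub_limitSurplus_ge hys0 (by linarith : 0 < yk)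
  rw [hys, limitSurplus, ← hL] at hconc
  calc ε / 15 + m * yk * ((2 * yk) ^ (1 / m) - 1)
      = ε / 15 + yk * (m * ((2 * yk) ^ (1 / m) - 1)) := by ring
    _ ≤ ε / 15 + yk * (L + ε / 3) := by
      gcongr ε / 15 + yk * ?_ <;> linarith
    _ ≤ 3 * yk - 1 := by nlinarith

theorem workload_inequality (epsilon : ℝ) (he0 : 0 < epsilon) (he1 : epsilon < 1)
    (delta : ℝ) (hdelta : delta = epsilon / 15)
    (k : ℕ) (hk : k = ⌈3 / epsilon⌉₊ + 1)
    (alpha : ℝ) (ha1 : 1 < alpha) (ha2 : alpha < 2)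
    (haeq : -2 * alpha + 3 + (alpha - 1) * Real.log (2 * (alpha - 1) / alpha) = 0)
    (zk : ℝ) (hzk : zk = (1 + epsilon / 4) * alpha)
    (yk : ℝ) (hyk : yk = (zk - 1) / zk)
    (y : ℕ → ℝ)
    (hy : ∀ j, 1 ≤ j → j ≤ k →
      y j = (1 / 2) * (2 * yk) ^ (((j : ℝ) - 1) / ((k : ℝ) - 1)))
    (zp : ℕ → ℝ)
    (hzp : ∀ j, 1 ≤ j → j ≤ k → zp j = yk / (y j * (1 - yk)))
    (z : ℕ → ℝ) (hz1 : z 1 = zp 1)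
    (hz : ∀ j, 2 ≤ j → j ≤ k → z j = zp j - zp (j - 1))
    (w : ℕ → ℝ) (hw1 : w 1 = 1)
    (hw : ∀ j, 2 ≤ j → j ≤ k → w j = y j) :
    ∑ j ∈ Finset.Icc 1 k, z j * (w j - delta) ≥ 1 := by
  have hk2 : 2 ≤ k := by have := Nat.ceil_pos.2 (by positivity : 0 < 3 / epsilon); omega
  have hm : 3 / epsilon ≤ (k : ℝ) - 1 := by
    rw [hk]; push_cast; simpa using Nat.le_ceil (3 / epsilon)
  have hm0 : 0 < (k : ℝ) - 1 := lt_of_lt_of_le (by positivity) hm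
  have hys0 : 0 < (alpha - 1) / alpha := div_pos (by linarith) (by linarith)
  have hys := limitSurplus_eq_zero_of_alpha ha1 haeq
  have hys38 := le_three_eighths_of_limitSurplus_eq_zero hys0
    (by rw [div_lt_iff₀ (by positivity)]; linarith) hys
  obtain ⟨hyk2, hgap⟩ := inflated_alpha_bounds he0 he1 ha1 hys38
  rw [← hzk, ← hyk] at hyk2 hgap
  have hkey := div_fifteen_add_mul_rpow_sub_one_le he0 hys0 hys hgap hyk2 hm
  have hyk0 : 0 < yk := by linarith
  have hypos : ∀ j, 1 ≤ j → j ≤ k → 0 < y j := fun j h1 h2 => by rw [hy j h1 h2]; positivity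
  rw [ge_iff_le, sum_Icc_mul_sub_eq_of_geometric (by omega) hypos
    (eq_rpow_inv_mul_of_eq_mul_rpow (by positivity) hy)
    (fun j h1 h2 => by rw [hzp j h1 h2, div_mul_eq_div_div_swap]) hz1 hz hw1 hw,
    hy 1 le_rfl (by omega), hy k (by omega) le_rfl, Nat.cast_one, sub_self, zero_div, rpow_zero,
    div_self hm0.ne', rpow_one, ← sub_nonneg]
  refine le_of_le_of_eq (div_nonneg (sub_nonneg.2 hkey) (by linarith : (0 : ℝ) ≤ 1 - yk)) ?_
  have : 1 - yk ≠ 0 := by linarith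
  rw [hdelta]
  field_simp
  ring
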